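/- arXiv:2503.23373 — 2 statements merged into one kernel-verified Lean document; each statement's English description precedes it below -/
import Mathlib

section
/- Let Γ be the free ℤ-module with basis g₁ = (f,-f), g₂ = (e₂,0), g₃ = (0,e₁), g₄ = (0,e₂) inside ℚ⁴ × ℚ⁴ (restricted to the span of e₁, e₂, f = (e₁+e₂)/2), and let Γ'' be the submodule generated by (f,-f), (e₂,-e₂), (f,-f+e₂), (e₂,e₁), where σ acts by σe₁=e₂, σe₂=-e₁. Then Γ'' has finite index in Γ and Γ/Γ'' is trivial. -/
/-! The generators of `Γ` are integral combinations of those of `Γ''`: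
`(0,e₂) = (f,-f+e₂) - (f,-f)`, `(e₂,0) = (e₂,-e₂) + (0,e₂)` and `(0,e₁) = (e₂,e₁) - (e₂,0)`.
So `Γ ≤ Γ''`, whatever the vectors `e₁, e₂, f` are, and `Γ/Γ''` is the zero module. -/

theorem Submodule.subsingleton_quotient_comap_subtype_of_le {R M : Type*} [Ring R]
    [AddCommGroup M] [Module R M] {p q : Submodule R M} (h : p ≤ q) :
    Subsingleton (p ⧸ q.comap p.subtype) :=
  Submodule.Quotient.subsingleton_iff.mpr (Submodule.comap_subtype_eq_top.mpr h)

theorem span_pairs_le_span_twisted_pairs {M : Type*} [AddCommGroup M] (e₁ e₂ f : M) :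
    Submodule.span ℤ {(f, -f), (e₂, 0), (0, e₁), (0, e₂)} ≤
      Submodule.span ℤ {(f, -f), (e₂, -e₂), (f, -f + e₂), (e₂, e₁)} := by
  set Γ'' := Submodule.span ℤ {(f, -f), (e₂, -e₂), (f, -f + e₂), (e₂, e₁)}
  have ha : (f, -f) ∈ Γ'' := Submodule.subset_span (by simp)
  have hb : (e₂, -e₂) ∈ Γ'' := Submodule.subset_span (by simp)
  have hc : (f, -f + e₂) ∈ Γ'' := Submodule.subset_span (by simp)
  have hd : (e₂, e₁) ∈ Γ'' := Submodule.subset_span (by simp)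
  have h₀₂ : ((0 : M), e₂) ∈ Γ'' := by simpa using Γ''.sub_mem hc ha
  have h₂₀ : (e₂, (0 : M)) ∈ Γ'' := by simpa using Γ''.add_mem hb h₀₂
  have h₀₁ : ((0 : M), e₁) ∈ Γ'' := by simpa using Γ''.sub_mem hd h₂₀
  rw [Submodule.span_le]
  rintro x (rfl | rfl | rfl | rfl)
  exacts [ha, h₂₀, h₀₁, h₀₂]

theorem first_summand_quotient_trivial_general
    (e₁ e₂ f : Fin 2 → ℚ)
    (Γ : Submodule ℤ ((Fin 2 → ℚ) × (Fin 2 → ℚ)))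
    (hΓ : Γ = Submodule.span ℤ {(f, -f), (e₂, 0), (0, e₁), (0, e₂)})
    (Γ'' : Submodule ℤ ((Fin 2 → ℚ) × (Fin 2 → ℚ)))
    (hΓ'' : Γ'' = Submodule.span ℤ {(f, -f), (e₂, -e₂), (f, -f + e₂), (e₂, e₁)}) :
    Finite (Γ ⧸ Submodule.comap Γ.subtype Γ'') ∧
    Subsingleton (Γ ⧸ Submodule.comap Γ.subtype Γ'') := by
  have hle : Γ ≤ Γ'' := hΓ ▸ hΓ'' ▸ span_pairs_le_span_twisted_pairs e₁ e₂ f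
  have := Submodule.subsingleton_quotient_comap_subtype_of_le hle
  exact ⟨Finite.of_subsingleton, this⟩

/-- In `V × V` with `V = ℚe₁ ⊕ ℚe₂` and `f = (e₁+e₂)/2`, the submodule `Γ''` generated by
`(f,-f), (e₂,-e₂), (f,-f+e₂), (e₂,e₁)` has finite index in the lattice
`Γ = ℤ⟨(f,-f), (e₂,0), (0,e₁), (0,e₂)⟩` and `Γ/Γ''` is trivial. -/
theorem first_summand_quotient_trivial
    (e₁ e₂ f : Fin 2 → ℚ)
    (he₁ : e₁ = ![1, 0]) (he₂ : e₂ = ![0, 1]) (hf : f = (2⁻¹ : ℚ) • (e₁ + e₂))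
    (Γ : Submodule ℤ ((Fin 2 → ℚ) × (Fin 2 → ℚ)))
    (hΓ : Γ = Submodule.span ℤ {(f, -f), (e₂, 0), (0, e₁), (0, e₂)})
    (Γ'' : Submodule ℤ ((Fin 2 → ℚ) × (Fin 2 → ℚ)))
    (hΓ'' : Γ'' = Submodule.span ℤ {(f, -f), (e₂, -e₂), (f, -f + e₂), (e₂, e₁)}) :
    Finite (Γ ⧸ Submodule.comap Γ.subtype Γ'') ∧
    Subsingleton (Γ ⧸ Submodule.comap Γ.subtype Γ'') :=
  first_summand_quotient_trivial_general e₁ e₂ f Γ hΓ Γ'' hΓ''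
end

section
/- Let S be a set with a group H acting on it such that every nontrivial h ∈ H has finite fixed-point set, and suppose S is infinite. With the twisted diagonal action of H on S × S and ι the swap, for every h ∈ H there exists a point p ∈ S × S fixed by ι∘h whose G-orbit (G = ⟨H, ι⟩) meets no fixed point of any nontrivial element of H. Consequently, the subgroup of G generated by stabilizers of such points contains ι·h for all h ∈ H, hence equals G. -/
open Equiv

/-- Let `S` be an infinite set and `H` a finite subgroup of `Perm S` each of whose
nontrivial elements has finitely many fixed points. With the twisted diagonal action of `H`
on `S × S` and the swap `ι`, for every `h ∈ H` there is a point fixed by `ι ∘ h` whose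
`G`-orbit (`G = ⟨H, ι⟩`) avoids the fixed points of all nontrivial twisted elements of `H`;
consequently the subgroup generated by stabilizers of such points is all of `G`. -/
theorem stabilizers_of_good_points_generate
    {S : Type*} [Infinite S] (H : Subgroup (Equiv.Perm S))
    (hHfin : (H : Set (Equiv.Perm S)).Finite)
    (hfix : ∀ h ∈ H, h ≠ 1 → {x : S | h x = x}.Finite)
    (G : Subgroup (Equiv.Perm (S × S)))
    (hG : G = Subgroup.closure
      (((fun h : Equiv.Perm S => Equiv.prodCongr h h⁻¹) '' (H : Set (Equiv.Perm S))) ∪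
        {Equiv.prodComm S S}))
    (Bad : Set (S × S))
    (hBad : Bad = ⋃ h ∈ {h : Equiv.Perm S | h ∈ H ∧ h ≠ 1},
      {p : S × S | Equiv.prodCongr h h⁻¹ p = p}) :
    (∀ h ∈ H, ∃ p : S × S,
      (Equiv.prodCongr h h⁻¹).trans (Equiv.prodComm S S) p = p ∧
      ∀ g ∈ G, g p ∉ Bad) ∧
    Subgroup.closure {g : Equiv.Perm (S × S) | g ∈ G ∧ ∃ p : S × S,
        ((∃ h ∈ H, (Equiv.prodCongr h h⁻¹).trans (Equiv.prodComm S S) p = p) ∧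
          (∀ g' ∈ G, g' p ∉ Bad)) ∧ g p = p}
      = G := by
  classical
  -- the finite set of points of S fixed by some nontrivial element of H
  set F : Set S := ⋃ k ∈ {k : Equiv.Perm S | k ∈ H ∧ k ≠ 1}, {y : S | k y = y} with hF
  have hFfin : F.Finite := by
    apply Set.Finite.biUnion (hHfin.subset (fun k hk => hk.1))
    intro k hk
    exact hfix k hk.1 hk.2
  have key : ∀ h ∈ H, ∃ p : S × S,
      (Equiv.prodCongr h h⁻¹).trans (Equiv.prodComm S S) p = p ∧
      ∀ g ∈ G, g p ∉ Bad := by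
    intro h hh
    obtain ⟨x, hx⟩ := (hFfin.infinite_compl).nonempty
    have hxF : x ∉ F := hx
    -- the H-orbit of x
    set O : Set S := {y : S | ∃ k ∈ H, k x = y} with hO
    have hOstab : ∀ k ∈ H, ∀ y ∈ O, k y ∈ O := by
      rintro k hk y ⟨m, hm, rfl⟩
      exact ⟨k * m, mul_mem hk hm, rfl⟩
    have hxO : x ∈ O := ⟨1, one_mem H, rfl⟩
    have hhxO : h x ∈ O := ⟨h, hh, rfl⟩
    -- each element of G (and its inverse) preserves O ×ˢ O
    have inv : ∀ g ∈ G,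
        (∀ a ∈ O, ∀ b ∈ O, (g (a, b)).1 ∈ O ∧ (g (a, b)).2 ∈ O) ∧
        (∀ a ∈ O, ∀ b ∈ O, (g⁻¹ (a, b)).1 ∈ O ∧ (g⁻¹ (a, b)).2 ∈ O) := by
      intro g hg
      rw [hG] at hg
      induction hg using Subgroup.closure_induction with
      | mem g hgset =>
        rcases hgset with ⟨k, hk, rfl⟩ | hcomm
        · constructor
          · intro a ha b hb
            refine ⟨hOstab k hk a ha, hOstab k⁻¹ (inv_mem hk) b hb⟩
          · intro a ha b hb
            have : (Equiv.prodCongr k k⁻¹)⁻¹ = Equiv.prodCongr k⁻¹ k := rfl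
            rw [this]
            exact ⟨hOstab k⁻¹ (inv_mem hk) a ha, hOstab k hk b hb⟩
        · rcases hcomm with rfl
          constructor
          · intro a ha b hb; exact ⟨hb, ha⟩
          · intro a ha b hb
            have : (Equiv.prodComm S S : Equiv.Perm (S × S))⁻¹ = Equiv.prodComm S S := rfl
            rw [this]
            exact ⟨hb, ha⟩
      | one => exact ⟨fun a ha b hb => ⟨ha, hb⟩, fun a ha b hb => by simpa using ⟨ha, hb⟩⟩
      | mul g₁ g₂ hg₁ hg₂ ih₁ ih₂ =>
        constructor
        · intro a ha b hb
          have h2 := (ih₂.1 a ha b hb)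
          have : (g₁ * g₂) (a, b) = g₁ ((g₂ (a, b)).1, (g₂ (a, b)).2) := by
            simp [Equiv.Perm.mul_apply]
          rw [this]
          exact ih₁.1 _ h2.1 _ h2.2
        · intro a ha b hb
          have h1 := (ih₁.2 a ha b hb)
          have : (g₁ * g₂)⁻¹ (a, b) = g₂⁻¹ ((g₁⁻¹ (a, b)).1, (g₁⁻¹ (a, b)).2) := by
            simp [Equiv.Perm.mul_apply, mul_inv_rev]
          rw [this]
          exact ih₂.2 _ h1.1 _ h1.2
      | inv g hg ih =>
        refine ⟨ih.2, ?_⟩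
        simpa using ih.1
    refine ⟨(x, h x), ?_, ?_⟩
    · simp
    · intro g hgG hgBad
      rw [hBad] at hgBad
      simp only [Set.mem_iUnion, Set.mem_setOf_eq] at hgBad
      obtain ⟨k, ⟨hkH, hk1⟩, hkfix⟩ := hgBad
      have horb := (inv g hgG).1 x hxO (h x) hhxO
      obtain ⟨m, hmH, hmx⟩ := horb.1
      -- k fixes the first coordinate of g (x, h x)
      have hfix1 : k ((g (x, h x)).1) = (g (x, h x)).1 := by
        have := congrArg Prod.fst hkfix
        simpa using this
      rw [← hmx] at hfix1
      have : (m⁻¹ * k * m) x = x := by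
        simp [Equiv.Perm.mul_apply, hfix1]
      have hmem : m⁻¹ * k * m ∈ H := mul_mem (mul_mem (inv_mem hmH) hkH) hmH
      have hne : m⁻¹ * k * m ≠ 1 := by
        intro hcontra
        apply hk1
        have : k = m * (m⁻¹ * k * m) * m⁻¹ := by group
        rw [hcontra] at this
        simpa using this
      apply hxF
      rw [hF]
      simp only [Set.mem_iUnion, Set.mem_setOf_eq]
      exact ⟨m⁻¹ * k * m, ⟨hmem, hne⟩, this⟩
  refine ⟨key, ?_⟩
  apply le_antisymm
  · rw [Subgroup.closure_le]
    intro g hg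
    exact hg.1
  · -- G ≤ closure of stabilizer elements
    conv_lhs => rw [hG]
    rw [Subgroup.closure_le]
    -- prodComm is in the stabilizer set
    have hcommG : (Equiv.prodComm S S : Equiv.Perm (S × S)) ∈ G := by
      rw [hG]; exact Subgroup.subset_closure (Or.inr rfl)
    obtain ⟨p₁, hp₁fix, hp₁good⟩ := key 1 (one_mem H)
    have hp₁comm : (Equiv.prodComm S S : Equiv.Perm (S × S)) p₁ = p₁ := by
      have : ((Equiv.prodCongr (1 : Equiv.Perm S) (1 : Equiv.Perm S)⁻¹).trans
          (Equiv.prodComm S S)) p₁ = (Equiv.prodComm S S) p₁ := by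
        simp
      rw [← this]; exact hp₁fix
    have hcommMem : (Equiv.prodComm S S : Equiv.Perm (S × S)) ∈
        Subgroup.closure {g : Equiv.Perm (S × S) | g ∈ G ∧ ∃ p : S × S,
          ((∃ h ∈ H, (Equiv.prodCongr h h⁻¹).trans (Equiv.prodComm S S) p = p) ∧
            (∀ g' ∈ G, g' p ∉ Bad)) ∧ g p = p} := by
      apply Subgroup.subset_closure
      exact ⟨hcommG, p₁, ⟨⟨1, one_mem H, hp₁fix⟩, hp₁good⟩, hp₁comm⟩
    rintro g (⟨k, hkH, rfl⟩ | hcomm)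
    · -- g = prodCongr k k⁻¹
      obtain ⟨p, hpfix, hpgood⟩ := key k hkH
      set t : Equiv.Perm (S × S) :=
        ((Equiv.prodCongr k k⁻¹).trans (Equiv.prodComm S S) : Equiv.Perm (S × S)) with ht
      have htG : t ∈ G := by
        rw [hG]
        have h1 : (Equiv.prodCongr k k⁻¹ : Equiv.Perm (S × S)) ∈
            Subgroup.closure (((fun h : Equiv.Perm S => Equiv.prodCongr h h⁻¹) ''
              (H : Set (Equiv.Perm S))) ∪ {Equiv.prodComm S S}) :=
          Subgroup.subset_closure (Or.inl ⟨k, hkH, rfl⟩)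
        have h2 : (Equiv.prodComm S S : Equiv.Perm (S × S)) ∈
            Subgroup.closure (((fun h : Equiv.Perm S => Equiv.prodCongr h h⁻¹) ''
              (H : Set (Equiv.Perm S))) ∪ {Equiv.prodComm S S}) :=
          Subgroup.subset_closure (Or.inr rfl)
        have : t = (Equiv.prodComm S S : Equiv.Perm (S × S)) *
            (Equiv.prodCongr k k⁻¹ : Equiv.Perm (S × S)) := rfl
        rw [this]
        exact mul_mem h2 h1
      have htMem : t ∈ Subgroup.closure {g : Equiv.Perm (S × S) | g ∈ G ∧ ∃ p : S × S,
          ((∃ h ∈ H, (Equiv.prodCongr h h⁻¹).trans (Equiv.prodComm S S) p = p) ∧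
            (∀ g' ∈ G, g' p ∉ Bad)) ∧ g p = p} := by
        apply Subgroup.subset_closure
        exact ⟨htG, p, ⟨⟨k, hkH, hpfix⟩, hpgood⟩, hpfix⟩
      have heq : (Equiv.prodCongr k k⁻¹ : Equiv.Perm (S × S)) =
          (Equiv.prodComm S S : Equiv.Perm (S × S)) * t := by
        ext q
        · simp [ht, Equiv.Perm.mul_apply]
        · simp [ht, Equiv.Perm.mul_apply]
      show (Equiv.prodCongr k k⁻¹ : Equiv.Perm (S × S)) ∈ _
      rw [heq]
      exact mul_mem hcommMem htMem
    · rcases hcomm with rfl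
      exact hcommMem
end
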